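/- arXiv:math/0306199 — 2 statements merged into one kernel-verified Lean document; each statement's English description precedes it below -/
import Mathlib

section
/- With the hypotheses and notation of the transport construction: if u, v ∈ M satisfy x^u, x^v ∈ S_x and u ≼ v, then the associated sequences satisfy u_i ≼ v_i for all i = 0,…,r. More precisely, if v = uw with w ∈ M and w₀,…,w_r is the sequence obtained from applying the construction to (x^u, w), then v_i = u_i w_i for all i. -/
namespace GarsideFormal

variable (G : Type*) [Group G]

/-- An atom of the submonoid `M`: a nontrivial element admitting no nontrivial
factorization inside `M`. -/
def IsMAtom (M : Submonoid G) (a : G) : Prop :=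
  a ∈ M ∧ a ≠ 1 ∧ ∀ b ∈ M, ∀ c ∈ M, a = b * c → b = 1 ∨ c = 1

/-- A Garside monoid `M`, realized as a submonoid (positive cone) of its group of
fractions `G`, together with its Garside element `δ`, left gcd and left lcm
operations (extended to `G`), and the cycling operation `cyc`. -/
structure Garside where
  M : Submonoid G
  δ : G
  gcd : G → G → G
  lcm : G → G → G
  cyc : G → G
  δ_mem : δ ∈ M
  /-- `G` is the group of fractions of `M`. -/
  fractions : ∀ g : G, ∃ a ∈ M, ∃ b ∈ M, g = a⁻¹ * b
  /-- `M` is generated by its atoms. -/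
  atoms_generate : Submonoid.closure {a : G | IsMAtom G M a} = M
  /-- Atomicity: bounded factorization lengths into atoms. -/
  atomic_bound : ∀ a ∈ M, ∃ N : ℕ, ∀ L : List G,
      (∀ b ∈ L, IsMAtom G M b) → L.prod = a → L.length ≤ N
  /-- Left divisors of `δ` coincide with right divisors of `δ`. -/
  divs_eq : {x : G | x ∈ M ∧ x⁻¹ * δ ∈ M} = {x : G | x ∈ M ∧ δ * x⁻¹ ∈ M}
  divs_finite : Set.Finite {x : G | x ∈ M ∧ x⁻¹ * δ ∈ M}
  divs_generate : Submonoid.closure {x : G | x ∈ M ∧ x⁻¹ * δ ∈ M} = M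
  gcd_dvd_left : ∀ a b : G, (gcd a b)⁻¹ * a ∈ M
  gcd_dvd_right : ∀ a b : G, (gcd a b)⁻¹ * b ∈ M
  gcd_greatest : ∀ a b x : G, x⁻¹ * a ∈ M → x⁻¹ * b ∈ M → x⁻¹ * gcd a b ∈ M
  lcm_dvd_left : ∀ a b : G, a⁻¹ * lcm a b ∈ M
  lcm_dvd_right : ∀ a b : G, b⁻¹ * lcm a b ∈ M
  lcm_least : ∀ a b x : G, a⁻¹ * x ∈ M → b⁻¹ * x ∈ M → (lcm a b)⁻¹ * x ∈ M
  /-- Cycling: if `k = inf x` then `cyc x = x ^ (τ⁻ᵏ A₁)` where `A₁ = δ ∧ δ⁻ᵏ x`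
  is the first factor of the left normal form of `x` (when `len x = 0` this
  gcd is `1` and `cyc x = x`). -/
  cyc_spec : ∀ (x : G) (k : ℤ),
      ((δ ^ k)⁻¹ * x ∈ M ∧ ∀ j : ℤ, (δ ^ j)⁻¹ * x ∈ M → j ≤ k) →
      cyc x = (δ ^ k * gcd δ ((δ ^ k)⁻¹ * x) * (δ ^ k)⁻¹)⁻¹ * x *
              (δ ^ k * gcd δ ((δ ^ k)⁻¹ * x) * (δ ^ k)⁻¹)

variable {G}

namespace Garside

variable (S : Garside G)

/-- Left divisibility `a ≼ b`. -/
def dvd (a b : G) : Prop := a⁻¹ * b ∈ S.M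

/-- Simple elements: the (left) divisors of `δ` in `M`. -/
def Simple (a : G) : Prop := a ∈ S.M ∧ a⁻¹ * S.δ ∈ S.M

/-- `k` is the infimum of `x`: maximal with `δ^k ≼ x`. -/
def IsInf (x : G) (k : ℤ) : Prop :=
  (S.δ ^ k)⁻¹ * x ∈ S.M ∧ ∀ j : ℤ, (S.δ ^ j)⁻¹ * x ∈ S.M → j ≤ k

/-- `s` is the supremum of `x`: minimal with `x ≼ δ^s`. -/
def IsSup (x : G) (s : ℤ) : Prop :=
  x⁻¹ * S.δ ^ s ∈ S.M ∧ ∀ j : ℤ, x⁻¹ * S.δ ^ j ∈ S.M → s ≤ j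

/-- `y` lies in the super summit set of `x`: `y` is conjugate to `x`, with
maximal infimum and minimal supremum among all conjugates of `x`. -/
def InSS (x y : G) : Prop :=
  IsConj x y ∧
  (∃ k : ℤ, S.IsInf y k ∧ ∀ z : G, IsConj x z → ∀ k' : ℤ, S.IsInf z k' → k' ≤ k) ∧
  (∃ s : ℤ, S.IsSup y s ∧ ∀ z : G, IsConj x z → ∀ s' : ℤ, S.IsSup z s' → s ≤ s')

/-- `y` lies in the ultra summit set of `x`: it is in the super summit set and
periodic under cycling. -/
def InUS (x y : G) : Prop :=
  S.InSS x y ∧ ∃ n : ℕ, 0 < n ∧ S.cyc^[n] y = y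

/-- `τ^k(z) = δ⁻ᵏ z δᵏ`, where `τ : z ↦ δ⁻¹zδ`. -/
def tauPow (k : ℤ) (z : G) : G := (S.δ ^ k)⁻¹ * z * S.δ ^ k

end Garside

/-- The ordered product `A (i+1) * A (i+2) * ⋯ * A r`. -/
def prodSeg (A : ℕ → G) (i r : ℕ) : G :=
  ((List.range (r - i)).map (fun j => A (i + 1 + j))).prod

namespace Garside

variable (S : Garside G)

/-- `x` has left normal form `δ^k A₁ ⋯ A_r`: each `Aᵢ` is a nontrivial simple
element and `(Aᵢ⁻¹ δ) ∧ A_{i+1} = 1`. -/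
def IsNormalForm (x : G) (k : ℤ) (r : ℕ) (A : ℕ → G) : Prop :=
  x = S.δ ^ k * prodSeg A 0 r ∧
  (∀ i, 1 ≤ i → i ≤ r → S.Simple (A i) ∧ A i ≠ 1) ∧
  (∀ i, 1 ≤ i → i < r → S.gcd ((A i)⁻¹ * S.δ) (A (i + 1)) = 1)

/-- The sequence `u₀, …, u_r` of the transport construction for `(x, u)`,
where `x` has normal form `δ^k A₁ ⋯ A_r`:
`u₀ = τᵏ(u)`, `u_r = u`, and `uᵢ = (A_{i+1} ⋯ A_r u) ∧ δ·τ(Aᵢ⁻¹ u_{i-1})`. -/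
def IsTransportSeq (k : ℤ) (r : ℕ) (A : ℕ → G) (u : G) (useq : ℕ → G) : Prop :=
  useq 0 = S.tauPow k u ∧ useq r = u ∧
  ∀ i, 1 ≤ i → i ≤ r →
    useq i = S.gcd (prodSeg A i r * u) (S.δ * S.tauPow 1 ((A i)⁻¹ * useq (i - 1)))

/-- The transport `φ_x(u) = τ⁻ᵏ(u₁) = τ⁻ᵏ(A₁⁻¹ · τᵏ(u) · (δ ∧ δ⁻ᵏ(x^u)))`,
where `k = inf x` and `A₁ = δ ∧ δ⁻ᵏ x`. -/
def transp (k : ℤ) (x u : G) : G :=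
  S.δ ^ k *
    ((S.gcd S.δ ((S.δ ^ k)⁻¹ * x))⁻¹ * S.tauPow k u *
      S.gcd S.δ ((S.δ ^ k)⁻¹ * (u⁻¹ * x * u))) * (S.δ ^ k)⁻¹

end Garside
/-! The transport sequence is defined by left gcds, so the first claim is monotonicity of `∧`,
once one knows that `τ` preserves `M` (it permutes the simple elements, which generate `M`).
For the second, the normal form factors of `x^u` are the `Aᵢ` conjugated by the `uᵢ`, so
their segment products telescope; together with `δ·τ(z) = zδ` this turns the recursion for
`wᵢ₊₁` into `u_{i+1}⁻¹` times the recursion for `vᵢ₊₁`, and `∧` commutes with left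
multiplication. -/

lemma Submonoid.zpow_conj_mem {M : Submonoid G} {g : G}
    (hconj : ∀ z ∈ M, g⁻¹ * z * g ∈ M) (hconj_inv : ∀ z ∈ M, g * z * g⁻¹ ∈ M) (k : ℤ)
    {z : G} (hz : z ∈ M) : (g ^ k)⁻¹ * z * g ^ k ∈ M := by
  induction k using Int.induction_on with
  | zero => simpa using hz
  | succ n ih =>
    have e : (g ^ ((n : ℤ) + 1))⁻¹ * z * g ^ ((n : ℤ) + 1)
        = g⁻¹ * ((g ^ (n : ℤ))⁻¹ * z * g ^ (n : ℤ)) * g := by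
      rw [zpow_add_one]; group
    exact e ▸ hconj _ ih
  | pred n ih =>
    have e : (g ^ (-(n : ℤ) - 1))⁻¹ * z * g ^ (-(n : ℤ) - 1)
        = g * ((g ^ (-(n : ℤ)))⁻¹ * z * g ^ (-(n : ℤ))) * g⁻¹ := by
      rw [zpow_sub_one]; group
    exact e ▸ hconj_inv _ ih

lemma prodSeg_conj (A c : ℕ → G) {i r : ℕ} (h : i ≤ r) :
    prodSeg (fun j => (c (j - 1))⁻¹ * A j * c j) i r = (c i)⁻¹ * prodSeg A i r * c r := by
  induction r, h using Nat.le_induction with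
  | base => simp [prodSeg]
  | succ r hir ih =>
    have hlen : r + 1 - i = r - i + 1 := by omega
    have hidx : i + 1 + (r - i) = r + 1 := by omega
    simp only [prodSeg, hlen, List.range_succ, List.map_append, List.prod_append] at ih ⊢
    simp only [List.map_cons, List.map_nil, List.prod_cons, List.prod_nil, hidx, ih,
      Nat.add_sub_cancel]
    group

namespace Garside

variable (S : Garside G)

lemma simple_iff {d : G} : S.Simple d ↔ d ∈ S.M ∧ S.δ * d⁻¹ ∈ S.M :=
  Set.ext_iff.mp S.divs_eq d

lemma conj_mem_of_forall_simple {g : G} (hg : ∀ d, S.Simple d → g⁻¹ * d * g ∈ S.M)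
    {z : G} (hz : z ∈ S.M) : g⁻¹ * z * g ∈ S.M := by
  rw [← S.divs_generate] at hz
  induction hz using Submonoid.closure_induction with
  | mem d hd => exact hg d hd
  | one => simp
  | mul a b _ _ ha hb =>
    have e : g⁻¹ * (a * b) * g = (g⁻¹ * a * g) * (g⁻¹ * b * g) := by group
    exact e ▸ S.M.mul_mem ha hb

lemma tau_mem {z : G} (hz : z ∈ S.M) : S.δ⁻¹ * z * S.δ ∈ S.M := by
  refine S.conj_mem_of_forall_simple (fun d hd => ?_) hz
  have hcompl : S.Simple (d⁻¹ * S.δ) := S.simple_iff.mpr ⟨hd.2, by simpa using hd.1⟩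
  simpa [mul_assoc] using hcompl.2

lemma tau_inv_mem {z : G} (hz : z ∈ S.M) : S.δ * z * S.δ⁻¹ ∈ S.M := by
  have h := S.conj_mem_of_forall_simple (g := S.δ⁻¹) (fun d hd => ?_) hz
  · rwa [inv_inv] at h
  have hcompl : S.Simple (S.δ * d⁻¹) :=
    ⟨(S.simple_iff.mp hd).2, by simpa [mul_assoc] using hd.1⟩
  simpa [mul_assoc] using (S.simple_iff.mp hcompl).2

lemma tauPow_mem (k : ℤ) {z : G} (hz : z ∈ S.M) : S.tauPow k z ∈ S.M :=
  Submonoid.zpow_conj_mem (fun _ => S.tau_mem) (fun _ => S.tau_inv_mem) k hz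

lemma tauPow_inv_mul (k : ℤ) (a b : G) :
    (S.tauPow k a)⁻¹ * S.tauPow k b = S.tauPow k (a⁻¹ * b) := by
  unfold tauPow; group

lemma delta_mul_tauPow_one (z : G) : S.δ * S.tauPow 1 z = z * S.δ := by
  unfold tauPow; group

lemma eq_nil_of_prod_eq_one {L : List G} (hL : ∀ b ∈ L, IsMAtom G S.M b) (h1 : L.prod = 1) :
    L = [] := by
  obtain ⟨N, hN⟩ := S.atomic_bound 1 S.M.one_mem
  -- Repeating `L` gives atom factorizations of `1` of unbounded length.
  have hlen := hN (List.replicate (N + 1) L).flatten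
    (fun b hb => by
      obtain ⟨l, hl, hbl⟩ := List.mem_flatten.mp hb
      exact hL b (List.eq_of_mem_replicate hl ▸ hbl))
    (by simp [List.prod_flatten, h1])
  rw [List.length_flatten, List.map_replicate, List.sum_replicate, smul_eq_mul] at hlen
  exact List.eq_nil_of_length_eq_zero (by nlinarith)

lemma eq_one_of_mem_of_inv_mem {p : G} (hp : p ∈ S.M) (hp' : p⁻¹ ∈ S.M) : p = 1 := by
  rw [← S.atoms_generate] at hp hp'
  obtain ⟨Lp, hLp, rfl⟩ := Submonoid.exists_list_of_mem_closure hp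
  obtain ⟨Lq, hLq, hLq_prod⟩ := Submonoid.exists_list_of_mem_closure hp'
  have hnil := S.eq_nil_of_prod_eq_one (L := Lp ++ Lq)
    (fun b hb => (List.mem_append.mp hb).elim (hLp b) (hLq b))
    (by rw [List.prod_append, hLq_prod, mul_inv_cancel])
  simp [List.append_eq_nil_iff.mp hnil]

variable {S}

lemma dvd_antisymm {a b : G} (hab : S.dvd a b) (hba : S.dvd b a) : a = b := by
  have hunit : a⁻¹ * b = 1 := S.eq_one_of_mem_of_inv_mem hab (by simpa [dvd] using hba)
  rwa [inv_mul_eq_one] at hunit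

lemma dvd_trans {a b c : G} (hab : S.dvd a b) (hbc : S.dvd b c) : S.dvd a c := by
  simpa [dvd, mul_assoc] using S.M.mul_mem hab hbc

lemma dvd_mul_left_iff (c : G) {a b : G} : S.dvd (c * a) (c * b) ↔ S.dvd a b := by
  simp [dvd, mul_assoc]

lemma dvd.mul_delta {a b : G} (h : S.dvd a b) : S.dvd (a * S.δ) (b * S.δ) := by
  simpa [dvd, mul_assoc] using S.tau_mem h

lemma gcd_mono {a a' b b' : G} (ha : S.dvd a a') (hb : S.dvd b b') :
    S.dvd (S.gcd a b) (S.gcd a' b') :=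
  S.gcd_greatest _ _ _ (dvd_trans (S.gcd_dvd_left a b) ha) (dvd_trans (S.gcd_dvd_right a b) hb)

lemma gcd_mul_left (c a b : G) : S.gcd (c * a) (c * b) = c * S.gcd a b := by
  apply dvd_antisymm
  · have h : S.dvd (c⁻¹ * S.gcd (c * a) (c * b)) (S.gcd a b) := S.gcd_greatest _ _ _
      ((dvd_mul_left_iff c).mp (by rw [mul_inv_cancel_left]; exact S.gcd_dvd_left _ _))
      ((dvd_mul_left_iff c).mp (by rw [mul_inv_cancel_left]; exact S.gcd_dvd_right _ _))
    rwa [← dvd_mul_left_iff c, mul_inv_cancel_left] at h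
  · exact S.gcd_greatest _ _ _ ((dvd_mul_left_iff c).mpr (S.gcd_dvd_left a b))
      ((dvd_mul_left_iff c).mpr (S.gcd_dvd_right a b))

lemma IsTransportSeq.dvd_of_dvd {k : ℤ} {r : ℕ} {A : ℕ → G} {u v : G} {useq vseq : ℕ → G}
    (hus : S.IsTransportSeq k r A u useq) (hvs : S.IsTransportSeq k r A v vseq)
    (huv : S.dvd u v) : ∀ i ≤ r, S.dvd (useq i) (vseq i) := by
  intro i
  induction i with
  | zero =>
    intro _
    simpa only [dvd, hus.1, hvs.1, tauPow_inv_mul] using S.tauPow_mem k huv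
  | succ i ih =>
    intro hi
    rw [hus.2.2 (i + 1) (by omega) hi, hvs.2.2 (i + 1) (by omega) hi, Nat.add_sub_cancel,
      delta_mul_tauPow_one, delta_mul_tauPow_one]
    exact gcd_mono ((dvd_mul_left_iff _).mpr huv)
      ((dvd_mul_left_iff _).mpr (ih (by omega))).mul_delta

lemma IsTransportSeq.eq_mul_of_isTransportSeq_conj {k : ℤ} {r : ℕ} {A : ℕ → G} {u v : G}
    {useq vseq wseq : ℕ → G}
    (hus : S.IsTransportSeq k r A u useq) (hvs : S.IsTransportSeq k r A v vseq)
    (hws : S.IsTransportSeq k r (fun i => (useq (i - 1))⁻¹ * A i * useq i) (u⁻¹ * v) wseq) :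
    ∀ i ≤ r, vseq i = useq i * wseq i := by
  intro i
  induction i with
  | zero =>
    intro _
    rw [hus.1, hvs.1, hws.1]
    unfold tauPow; group
  | succ i ih =>
    intro hi
    have hw : wseq (i + 1) = (useq (i + 1))⁻¹ *
        S.gcd (prodSeg A (i + 1) r * v) ((A (i + 1))⁻¹ * vseq i * S.δ) := by
      rw [hws.2.2 (i + 1) (by omega) hi, prodSeg_conj A useq hi, hus.2.1,
        delta_mul_tauPow_one, ih (by omega), ← gcd_mul_left]
      simp only [Nat.add_sub_cancel]
      congr 1 <;> group
    rw [hw, mul_inv_cancel_left, hvs.2.2 (i + 1) (by omega) hi, Nat.add_sub_cancel,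
      delta_mul_tauPow_one]

end Garside

theorem transport_seq_monotone_general {G : Type*} [Group G] (S : Garside G)
    (u v : G) (k : ℤ) (r : ℕ) (A : ℕ → G)
    (useq vseq : ℕ → G)
    (hus : S.IsTransportSeq k r A u useq) (hvs : S.IsTransportSeq k r A v vseq)
    (huv : u⁻¹ * v ∈ S.M) :
    (∀ i, i ≤ r → (useq i)⁻¹ * vseq i ∈ S.M) ∧
    ∀ wseq : ℕ → G,
      S.IsTransportSeq k r (fun i => (useq (i - 1))⁻¹ * A i * useq i) (u⁻¹ * v) wseq →
      ∀ i, i ≤ r → vseq i = useq i * wseq i :=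
  ⟨hus.dvd_of_dvd hvs huv, fun _ hws => hus.eq_mul_of_isTransportSeq_conj hvs hws⟩

/-- Monotonicity of the transport construction: if `u ≼ v` then `uᵢ ≼ vᵢ` for
all `i`; more precisely, if `v = u w` and `w₀,…,w_r` is the sequence for
`(x^u, w)` (with respect to the normal form `δ^k (u₀⁻¹A₁u₁)⋯(u_{r-1}⁻¹A_ru_r)`
of `x^u`), then `vᵢ = uᵢ wᵢ` for all `i`. -/
theorem transport_seq_monotone {G : Type*} [Group G] (S : Garside G)
    (x u v : G) (k : ℤ) (r : ℕ) (A : ℕ → G)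
    (hr : 1 ≤ r) (hnf : S.IsNormalForm x k r A) (hx : S.InSS x x)
    (hu : u ∈ S.M) (hv : v ∈ S.M)
    (hxu : S.InSS x (u⁻¹ * x * u)) (hxv : S.InSS x (v⁻¹ * x * v))
    (useq vseq : ℕ → G)
    (hus : S.IsTransportSeq k r A u useq) (hvs : S.IsTransportSeq k r A v vseq)
    (huv : u⁻¹ * v ∈ S.M) :
    (∀ i, i ≤ r → (useq i)⁻¹ * vseq i ∈ S.M) ∧
    ∀ wseq : ℕ → G,
      S.IsTransportSeq k r (fun i => (useq (i - 1))⁻¹ * A i * useq i) (u⁻¹ * v) wseq →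
      ∀ i, i ≤ r → vseq i = useq i * wseq i :=
  transport_seq_monotone_general S u v k r A useq vseq hus hvs huv

end GarsideFormal
end

section
/- With the hypotheses and notation of the transport construction: if u = δ, then the associated sequence satisfies u_i = δ for all i = 0,…,r. -/
namespace GarsideFormal

variable (G : Type*) [Group G]

variable {G}

section Aux

variable {S : Garside G}

/-- The monoid `M` has no nontrivial units. -/
lemma mem_inv_mem_eq_one {a : G} (ha : a ∈ S.M) (ha' : a⁻¹ ∈ S.M) : a = 1 := by
  rw [← S.atoms_generate] at ha ha'
  obtain ⟨L, hL, hLp⟩ := Submonoid.exists_list_of_mem_closure ha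
  obtain ⟨L', hL', hLp'⟩ := Submonoid.exists_list_of_mem_closure ha'
  obtain ⟨N, hN⟩ := S.atomic_bound 1 (Submonoid.one_mem _)
  by_contra hne
  have hLne : L ≠ [] := by rintro rfl; exact hne (hLp.symm.trans rfl)
  have hlen : 1 ≤ L.length := List.length_pos_iff.mpr hLne
  have key : ∀ n : ℕ, n * (L.length + L'.length) ≤ N := by
    intro n
    have := hN ((List.replicate n (L ++ L')).flatten)
      (by
        intro b hb
        rw [List.mem_flatten] at hb
        obtain ⟨l, hl, hbl⟩ := hb
        rw [List.mem_replicate] at hl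
        rcases List.mem_append.mp (hl.2 ▸ hbl) with h | h
        · exact hL b h
        · exact hL' b h)
      (by
        rw [List.prod_flatten]
        have : (List.replicate n (L ++ L')).map List.prod = List.replicate n (1 : G) := by
          rw [List.map_replicate, List.prod_append, hLp, hLp', mul_inv_cancel]
        rw [this, List.prod_replicate, one_pow])
    simpa [List.length_flatten, List.map_replicate, List.sum_replicate, smul_eq_mul] using this
  have := key (N + 1)
  nlinarith [key (N + 1)]

/-- `τ` maps left divisors of `δ` into `M`. -/
lemma tau_div_mem {d : G} (hd : d ∈ S.M) (hd' : d⁻¹ * S.δ ∈ S.M) :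
    S.δ⁻¹ * d * S.δ ∈ S.M := by
  have ht : d⁻¹ * S.δ ∈ {x : G | x ∈ S.M ∧ x⁻¹ * S.δ ∈ S.M} := by
    have : d⁻¹ * S.δ ∈ {x : G | x ∈ S.M ∧ S.δ * x⁻¹ ∈ S.M} := by
      refine ⟨hd', ?_⟩
      have : S.δ * (d⁻¹ * S.δ)⁻¹ = d := by group
      rw [this]; exact hd
    rwa [← S.divs_eq] at this
  have := ht.2
  have heq : (d⁻¹ * S.δ)⁻¹ * S.δ = S.δ⁻¹ * d * S.δ := by group
  rwa [heq] at this

/-- `τ⁻¹` maps left divisors of `δ` into `M`. -/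
lemma tau_inv_div_mem {d : G} (hd : d ∈ S.M) (hd' : d⁻¹ * S.δ ∈ S.M) :
    S.δ * d * S.δ⁻¹ ∈ S.M := by
  have hd2 : d ∈ {x : G | x ∈ S.M ∧ S.δ * x⁻¹ ∈ S.M} := by
    rw [← S.divs_eq]; exact ⟨hd, hd'⟩
  set c := S.δ * d⁻¹ with hc
  have hcM : c ∈ S.M := hd2.2
  have hcd : c ∈ {x : G | x ∈ S.M ∧ x⁻¹ * S.δ ∈ S.M} := by
    refine ⟨hcM, ?_⟩
    have : c⁻¹ * S.δ = d := by rw [hc]; group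
    rw [this]; exact hd
  have hcd' : c ∈ {x : G | x ∈ S.M ∧ S.δ * x⁻¹ ∈ S.M} := by rwa [← S.divs_eq]
  have := hcd'.2
  have heq : S.δ * c⁻¹ = S.δ * d * S.δ⁻¹ := by rw [hc]; group
  rwa [heq] at this

/-- `τ` maps `M` into `M`. -/
lemma tau_mem {m : G} (hm : m ∈ S.M) : S.δ⁻¹ * m * S.δ ∈ S.M := by
  rw [← S.divs_generate] at hm
  obtain ⟨L, hL, hLp⟩ := Submonoid.exists_list_of_mem_closure hm
  subst hLp
  clear hm
  induction L with
  | nil => simpa using Submonoid.one_mem S.M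
  | cons a L ih =>
    have ha := hL a List.mem_cons_self
    have hrest := ih (fun b hb => hL b (List.mem_cons_of_mem _ hb))
    have : S.δ⁻¹ * (a :: L).prod * S.δ =
        (S.δ⁻¹ * a * S.δ) * (S.δ⁻¹ * L.prod * S.δ) := by
      rw [List.prod_cons]; group
    rw [this]
    exact S.M.mul_mem (tau_div_mem ha.1 ha.2) hrest

/-- `τ⁻¹` maps `M` into `M`. -/
lemma tau_inv_mem {m : G} (hm : m ∈ S.M) : S.δ * m * S.δ⁻¹ ∈ S.M := by
  rw [← S.divs_generate] at hm
  obtain ⟨L, hL, hLp⟩ := Submonoid.exists_list_of_mem_closure hm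
  subst hLp
  clear hm
  induction L with
  | nil => simpa using Submonoid.one_mem S.M
  | cons a L ih =>
    have ha := hL a List.mem_cons_self
    have hrest := ih (fun b hb => hL b (List.mem_cons_of_mem _ hb))
    have : S.δ * (a :: L).prod * S.δ⁻¹ =
        (S.δ * a * S.δ⁻¹) * (S.δ * L.prod * S.δ⁻¹) := by
      rw [List.prod_cons]; group
    rw [this]
    exact S.M.mul_mem (tau_inv_div_mem ha.1 ha.2) hrest

lemma prodSeg_succ {A : ℕ → G} {i r : ℕ} (h : i < r) :
    prodSeg A i r = A (i + 1) * prodSeg A (i + 1) r := by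
  unfold prodSeg
  have h1 : r - i = (r - (i + 1)) + 1 := by omega
  rw [h1, List.range_succ_eq_map, List.map_cons, List.prod_cons, List.map_map]
  have hfun : ((fun j => A (i + 1 + j)) ∘ Nat.succ) = fun j => A (i + 1 + 1 + j) := by
    funext j
    simp only [Function.comp_apply]
    congr 1
    omega
  rw [hfun]

lemma prodSeg_self (A : ℕ → G) (r : ℕ) : prodSeg A r r = 1 := by
  simp [prodSeg]

lemma prodSeg_mem {r : ℕ} {A : ℕ → G}
    (hA : ∀ j, 1 ≤ j → j ≤ r → A j ∈ S.M) (i : ℕ) :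
    prodSeg A i r ∈ S.M := by
  apply Submonoid.list_prod_mem
  intro x hx
  rw [List.mem_map] at hx
  obtain ⟨j, hj, rfl⟩ := hx
  rw [List.mem_range] at hj
  exact hA _ (by omega) (by omega)

/-- If the normal form condition holds, then `(Aᵢ⁻¹δ)` and `A_{i+1}⋯A_r` have
trivial common left divisors. -/
lemma tail_coprime {r : ℕ} {A : ℕ → G}
    (hsimple : ∀ i, 1 ≤ i → i ≤ r → S.Simple (A i))
    (hcop : ∀ i, 1 ≤ i → i < r → S.gcd ((A i)⁻¹ * S.δ) (A (i + 1)) = 1) :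
    ∀ d i, r - i = d → 1 ≤ i → i ≤ r → ∀ s, s ∈ S.M →
      s⁻¹ * ((A i)⁻¹ * S.δ) ∈ S.M → s⁻¹ * prodSeg A i r ∈ S.M → s = 1 := by
  intro d
  induction d with
  | zero =>
    intro i hd h1 h2 s hs hst hsp
    have hir : i = r := by omega
    subst hir
    rw [prodSeg_self, mul_one] at hsp
    exact mem_inv_mem_eq_one hs hsp
  | succ n ih =>
    intro i hd h1 h2 s hs hst hsp
    have hilt : i < r := by omega
    rw [prodSeg_succ hilt] at hsp
    set c := S.lcm (A (i + 1)) s with hc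
    have hA1 : S.Simple (A (i + 1)) := hsimple _ (by omega) (by omega)
    -- s divides δ
    have hsd : s⁻¹ * S.δ ∈ S.M := by
      have hAi := hsimple i h1 (by omega)
      have h2' : (A i)⁻¹ * S.δ * ((A i)⁻¹ * S.δ)⁻¹ * S.δ ∈ S.M := by
        have := tau_div_mem hAi.1 hAi.2
        have heq : (A i)⁻¹ * S.δ * ((A i)⁻¹ * S.δ)⁻¹ * S.δ = S.δ := by group
        rw [heq]; exact S.δ_mem
      have hti := tau_div_mem hAi.1 hAi.2
      have heq : s⁻¹ * S.δ =
          (s⁻¹ * ((A i)⁻¹ * S.δ)) * (S.δ⁻¹ * A i * S.δ) := by group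
      rw [heq]; exact S.M.mul_mem hst hti
    -- c divides A(i+1) * tail
    have hcdvd : c⁻¹ * (A (i + 1) * prodSeg A (i + 1) r) ∈ S.M := by
      apply S.lcm_least
      · have heq : (A (i + 1))⁻¹ * (A (i + 1) * prodSeg A (i + 1) r) =
            prodSeg A (i + 1) r := by group
        rw [heq]
        exact prodSeg_mem (fun j hj1 hj2 => (hsimple j hj1 hj2).1) _
      · exact hsp
    -- c divides δ
    have hcδ : c⁻¹ * S.δ ∈ S.M := S.lcm_least _ _ _ hA1.2 hsd
    -- s' := A(i+1)⁻¹ c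
    set s' := (A (i + 1))⁻¹ * c with hs'
    have hs'M : s' ∈ S.M := S.lcm_dvd_left _ _
    have hs'δ : s'⁻¹ * ((A (i + 1))⁻¹ * S.δ) ∈ S.M := by
      have heq : s'⁻¹ * ((A (i + 1))⁻¹ * S.δ) = c⁻¹ * S.δ := by rw [hs']; group
      rw [heq]; exact hcδ
    have hs'p : s'⁻¹ * prodSeg A (i + 1) r ∈ S.M := by
      have heq : s'⁻¹ * prodSeg A (i + 1) r =
          c⁻¹ * (A (i + 1) * prodSeg A (i + 1) r) := by rw [hs']; group
      rw [heq]; exact hcdvd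
    have hs'1 : s' = 1 := ih (i + 1) (by omega) (by omega) (by omega) s' hs'M hs'δ hs'p
    -- hence s divides A(i+1)
    have hsA : s⁻¹ * A (i + 1) ∈ S.M := by
      have hcA : c = A (i + 1) := by
        have : A (i + 1) * s' = c := by rw [hs']; group
        rw [← this, hs'1, mul_one]
      have := S.lcm_dvd_right (A (i + 1)) s
      rwa [← hc, hcA] at this
    have hgcd := S.gcd_greatest ((A i)⁻¹ * S.δ) (A (i + 1)) s hst hsA
    rw [hcop i h1 hilt] at hgcd
    rw [mul_one] at hgcd
    exact mem_inv_mem_eq_one hs hgcd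

end Aux

/-- In the transport construction, if `u = δ` then `uᵢ = δ` for all `i`. -/
theorem transport_seq_delta {G : Type*} [Group G] (S : Garside G)
    (x : G) (k : ℤ) (r : ℕ) (A : ℕ → G)
    (hr : 1 ≤ r) (hnf : S.IsNormalForm x k r A) (hx : S.InSS x x)
    (hxd : S.InSS x (S.δ⁻¹ * x * S.δ))
    (useq : ℕ → G) (hus : S.IsTransportSeq k r A S.δ useq) :
    ∀ i, i ≤ r → useq i = S.δ := by
  obtain ⟨_, hsimp, hcop⟩ := hnf
  have hsimple : ∀ i, 1 ≤ i → i ≤ r → S.Simple (A i) := fun i h1 h2 => (hsimp i h1 h2).1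
  have hcop' : ∀ i, 1 ≤ i → i < r → S.gcd ((A i)⁻¹ * S.δ) (A (i + 1)) = 1 := hcop
  intro i
  induction i with
  | zero =>
    intro _
    rw [hus.1]
    unfold Garside.tauPow
    have hcomm : S.δ * S.δ ^ k = S.δ ^ k * S.δ := ((Commute.refl S.δ).zpow_right k).eq
    rw [mul_assoc, hcomm, ← mul_assoc, inv_mul_cancel, one_mul]
  | succ n ih =>
    intro hn
    have hprev : useq n = S.δ := ih (by omega)
    have hrec := hus.2.2 (n + 1) (by omega) hn
    have hn1 : n + 1 - 1 = n := by omega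
    rw [hn1, hprev] at hrec
    -- second argument simplifies
    set ti := (A (n + 1))⁻¹ * S.δ with hti
    have harg2 : S.δ * S.tauPow 1 ((A (n + 1))⁻¹ * S.δ) = ti * S.δ := by
      unfold Garside.tauPow
      rw [hti, zpow_one]
      group
    rw [harg2] at hrec
    set P := prodSeg A (n + 1) r with hP
    have hPM : P ∈ S.M :=
      prodSeg_mem (fun j hj1 hj2 => (hsimple j hj1 hj2).1) _
    have hA := hsimple (n + 1) (by omega) hn
    have htiM : ti ∈ S.M := hA.2
    -- δ divides both arguments
    have hd1 : S.δ⁻¹ * (P * S.δ) ∈ S.M := by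
      have heq : S.δ⁻¹ * (P * S.δ) = S.δ⁻¹ * P * S.δ := by group
      rw [heq]; exact tau_mem hPM
    have hd2 : S.δ⁻¹ * (ti * S.δ) ∈ S.M := by
      have heq : S.δ⁻¹ * (ti * S.δ) = S.δ⁻¹ * ti * S.δ := by group
      rw [heq]; exact tau_mem htiM
    set g := S.gcd (P * S.δ) (ti * S.δ) with hg
    have hmM : S.δ⁻¹ * g ∈ S.M := S.gcd_greatest _ _ _ hd1 hd2
    set m := S.δ⁻¹ * g with hm
    have hm'M : S.δ * m * S.δ⁻¹ ∈ S.M := tau_inv_mem hmM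
    set m' := S.δ * m * S.δ⁻¹ with hm'
    -- m' divides P and ti
    have hgP : g⁻¹ * (P * S.δ) ∈ S.M := S.gcd_dvd_left _ _
    have hgti : g⁻¹ * (ti * S.δ) ∈ S.M := S.gcd_dvd_right _ _
    have hm'P : m'⁻¹ * P ∈ S.M := by
      have heq : m'⁻¹ * P = S.δ * (g⁻¹ * (P * S.δ)) * S.δ⁻¹ := by
        rw [hm', hm]; group
      rw [heq]; exact tau_inv_mem hgP
    have hm'ti : m'⁻¹ * ti ∈ S.M := by
      have heq : m'⁻¹ * ti = S.δ * (g⁻¹ * (ti * S.δ)) * S.δ⁻¹ := by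
        rw [hm', hm]; group
      rw [heq]; exact tau_inv_mem hgti
    have hm'1 : m' = 1 :=
      tail_coprime hsimple hcop' (r - (n + 1)) (n + 1) rfl (by omega) hn m' hm'M
        (by rwa [← hti]) (by rwa [← hP])
    have hm1 : m = 1 := by
      have : m = S.δ⁻¹ * m' * S.δ := by rw [hm']; group
      rw [this, hm'1, mul_one, inv_mul_cancel]
    have hgδ : g = S.δ := by
      have h1 : S.δ⁻¹ * g = 1 := hm1
      calc g = S.δ * (S.δ⁻¹ * g) := by group
        _ = S.δ := by rw [h1, mul_one]
    rw [hrec, hgδ]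

end GarsideFormal
end
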